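/- arXiv:1006.1667 — 6 statements merged into one kernel-verified Lean document; each statement's English description precedes it below -/
import Mathlib

section
/- Let A1, A2, A3, A4, B1, B2, B3, B4 be real numbers with 0 ≤ A1 ≤ A2 ≤ A4, A1 ≤ A3 ≤ A4, 0 ≤ B1 ≤ B2 ≤ B4, and B1 ≤ B3 ≤ B4. Then for every pair of nonnegative real numbers (R1, R2) the following are equivalent: (i) there exist nonnegative reals r10, r11, r20, r22 with R1 = r10 + r11, R2 = r20 + r22, r11 ≤ A1, r11 + r20 ≤ A2, r11 + r10 ≤ A3, r11 + r10 + r20 ≤ A4, r22 ≤ B1, r22 + r10 ≤ B2, r22 + r20 ≤ B3, and r22 + r20 + r10 ≤ B4; (ii) R1 ≤ A3, R2 ≤ B3, R1 + R2 ≤ A4 + B1, R1 + R2 ≤ A1 + B4, R1 + R2 ≤ A2 + B2, 2·R1 + R2 ≤ A4 + A1 + B2, R1 + 2·R2 ≤ A2 + B1 + B4, R1 ≤ A1 + B2, and R2 ≤ B1 + A2. -/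
/-- Fourier–Motzkin elimination underlying the compact form of the Han–Kobayashi
achievable region for the two-user interference channel without feedback. -/
theorem hanKobayashi_FM_elimination
    (A1 A2 A3 A4 B1 B2 B3 B4 : ℝ)
    (hA1 : 0 ≤ A1) (hA12 : A1 ≤ A2) (hA24 : A2 ≤ A4)
    (hA13 : A1 ≤ A3) (hA34 : A3 ≤ A4)
    (hB1 : 0 ≤ B1) (hB12 : B1 ≤ B2) (hB24 : B2 ≤ B4)
    (hB13 : B1 ≤ B3) (hB34 : B3 ≤ B4)
    (R1 R2 : ℝ) (hR1 : 0 ≤ R1) (hR2 : 0 ≤ R2) :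
    (∃ r10 r11 r20 r22 : ℝ,
        0 ≤ r10 ∧ 0 ≤ r11 ∧ 0 ≤ r20 ∧ 0 ≤ r22 ∧
        R1 = r10 + r11 ∧ R2 = r20 + r22 ∧
        r11 ≤ A1 ∧ r11 + r20 ≤ A2 ∧ r11 + r10 ≤ A3 ∧ r11 + r10 + r20 ≤ A4 ∧
        r22 ≤ B1 ∧ r22 + r10 ≤ B2 ∧ r22 + r20 ≤ B3 ∧ r22 + r20 + r10 ≤ B4) ↔
      (R1 ≤ A3 ∧ R2 ≤ B3 ∧
        R1 + R2 ≤ A4 + B1 ∧ R1 + R2 ≤ A1 + B4 ∧ R1 + R2 ≤ A2 + B2 ∧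
        2 * R1 + R2 ≤ A4 + A1 + B2 ∧ R1 + 2 * R2 ≤ A2 + B1 + B4 ∧
        R1 ≤ A1 + B2 ∧ R2 ≤ B1 + A2) := by
  constructor
  · rintro ⟨r10, r11, r20, r22, h0, h1, h2, h3, e1, e2, c1, c2, c3, c4, c5, c6, c7, c8⟩
    refine ⟨?_, ?_, ?_, ?_, ?_, ?_, ?_, ?_, ?_⟩ <;> linarith
  · rintro ⟨h1, h2, h3, h4, h5, h6, h7, h8, h9⟩
    set r20 := max (max 0 (R2 - B1)) (R1 + R2 - A1 - B2) with hr20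
    have l1 : 0 ≤ r20 := le_max_of_le_left (le_max_left _ _)
    have l2 : R2 - B1 ≤ r20 := le_max_of_le_left (le_max_right _ _)
    have l3 : R1 + R2 - A1 - B2 ≤ r20 := le_max_right _ _
    have u1 : r20 ≤ R2 := max_le (max_le hR2 (by linarith)) (by linarith)
    have u2 : r20 ≤ A4 - R1 := max_le (max_le (by linarith) (by linarith)) (by linarith)
    have u3 : r20 ≤ A2 := max_le (max_le (by linarith) (by linarith)) (by linarith)
    have u4 : r20 ≤ A2 + B4 - R1 - R2 :=
      max_le (max_le (by linarith) (by linarith)) (by linarith)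
    set r10 := max (max 0 (R1 - A1)) (r20 + R1 - A2) with hr10
    have m1 : 0 ≤ r10 := le_max_of_le_left (le_max_left _ _)
    have m2 : R1 - A1 ≤ r10 := le_max_of_le_left (le_max_right _ _)
    have m3 : r20 + R1 - A2 ≤ r10 := le_max_right _ _
    have v1 : r10 ≤ R1 := max_le (max_le hR1 (by linarith)) (by linarith)
    have v2 : r10 ≤ B4 - R2 := max_le (max_le (by linarith) (by linarith)) (by linarith)
    have v3 : r10 ≤ r20 + B2 - R2 :=
      max_le (max_le (by linarith) (by linarith)) (by linarith)
    exact ⟨r10, R1 - r10, r20, R2 - r20, m1, by linarith, l1, by linarith,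
      by ring, by ring, by linarith, by linarith, by linarith, by linarith,
      by linarith, by linarith, by linarith, by linarith⟩
end

section
/- Let a0, a1, a2, a3, a4, a5, b0, b1, b2, b3, b4, b5 be real numbers with 0 ≤ a0, 0 ≤ a1 ≤ a2 ≤ a4 ≤ a5, a1 ≤ a3 ≤ a4, 0 ≤ b0, 0 ≤ b1 ≤ b2 ≤ b4 ≤ b5, and b1 ≤ b3 ≤ b4. Then for every pair of nonnegative real numbers (R1, R2) the following are equivalent: (i) there exist nonnegative reals x1, x2, x3, y1, y2, y3 with R1 = x1 + x2 + x3, R2 = y1 + y2 + y3, x1 ≤ a0, y1 ≤ b0, x3 ≤ a1, x3 + y2 ≤ a2, x3 + x2 ≤ a3, x3 + x2 + y2 ≤ a4, x3 + x2 + y2 + y1 + x1 ≤ a5, y3 ≤ b1, y3 + x2 ≤ b2, y3 + y2 ≤ b3, y3 + y2 + x2 ≤ b4, and y3 + y2 + x2 + y1 + x1 ≤ b5; (ii) R1 ≤ a5, R1 ≤ a0 + a3, R1 ≤ a0 + a1 + b2, R2 ≤ b5, R2 ≤ b0 + b3, R2 ≤ b0 + b1 + a2, R1 + R2 ≤ a5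 + b1, R1 + R2 ≤ a1 + b5, R1 + R2 ≤ a0 + b0 + a4 + b1, R1 + R2 ≤ a0 + b0 + a1 + b4, R1 + R2 ≤ a0 + b0 + a2 + b2, 2·R1 + R2 ≤ a0 + a1 + a5 + b2, 2·R1 + R2 ≤ 2·a0 + b0 + a1 + a4 + b2, R1 + 2·R2 ≤ b0 + a2 + b1 + b5, and R1 + 2·R2 ≤ a0 + 2·b0 + a2 + b1 + b4. -/
set_option maxHeartbeats 2000000


/-- Fourier–Motzkin elimination underlying the superposition-only achievable region
(Theorem 2) for the interference channel with generalized feedback, together with the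
two extra single-rate bounds of Remark 2. -/
theorem superpositionOnly_FM_elimination
    (a0 a1 a2 a3 a4 a5 b0 b1 b2 b3 b4 b5 : ℝ)
    (ha0 : 0 ≤ a0)
    (ha1 : 0 ≤ a1) (ha12 : a1 ≤ a2) (ha24 : a2 ≤ a4) (ha45 : a4 ≤ a5)
    (ha13 : a1 ≤ a3) (ha34 : a3 ≤ a4)
    (hb0 : 0 ≤ b0)
    (hb1 : 0 ≤ b1) (hb12 : b1 ≤ b2) (hb24 : b2 ≤ b4) (hb45 : b4 ≤ b5)
    (hb13 : b1 ≤ b3) (hb34 : b3 ≤ b4)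
    (R1 R2 : ℝ) (hR1 : 0 ≤ R1) (hR2 : 0 ≤ R2) :
    (∃ x1 x2 x3 y1 y2 y3 : ℝ,
        0 ≤ x1 ∧ 0 ≤ x2 ∧ 0 ≤ x3 ∧ 0 ≤ y1 ∧ 0 ≤ y2 ∧ 0 ≤ y3 ∧
        R1 = x1 + x2 + x3 ∧ R2 = y1 + y2 + y3 ∧
        x1 ≤ a0 ∧ y1 ≤ b0 ∧
        x3 ≤ a1 ∧ x3 + y2 ≤ a2 ∧ x3 + x2 ≤ a3 ∧ x3 + x2 + y2 ≤ a4 ∧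
        x3 + x2 + y2 + y1 + x1 ≤ a5 ∧
        y3 ≤ b1 ∧ y3 + x2 ≤ b2 ∧ y3 + y2 ≤ b3 ∧ y3 + y2 + x2 ≤ b4 ∧
        y3 + y2 + x2 + y1 + x1 ≤ b5) ↔
      (R1 ≤ a5 ∧ R1 ≤ a0 + a3 ∧ R1 ≤ a0 + a1 + b2 ∧
        R2 ≤ b5 ∧ R2 ≤ b0 + b3 ∧ R2 ≤ b0 + b1 + a2 ∧
        R1 + R2 ≤ a5 + b1 ∧ R1 + R2 ≤ a1 + b5 ∧
        R1 + R2 ≤ a0 + b0 + a4 + b1 ∧ R1 + R2 ≤ a0 + b0 + a1 + b4 ∧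
        R1 + R2 ≤ a0 + b0 + a2 + b2 ∧
        2 * R1 + R2 ≤ a0 + a1 + a5 + b2 ∧
        2 * R1 + R2 ≤ 2 * a0 + b0 + a1 + a4 + b2 ∧
        R1 + 2 * R2 ≤ b0 + a2 + b1 + b5 ∧
        R1 + 2 * R2 ≤ a0 + 2 * b0 + a2 + b1 + b4) := by
  constructor
  · rintro ⟨x1, x2, x3, y1, y2, y3, hx1, hx2, hx3, hy1, hy2, hy3, hE1, hE2,
      k1, k2, k3, k4, k5, k6, k7, k8, k9, k10, k11, k12⟩
    refine ⟨?_, ?_, ?_, ?_, ?_, ?_, ?_, ?_, ?_, ?_, ?_, ?_, ?_, ?_, ?_⟩ <;> linarith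
  · rintro ⟨c1, c2, c3, c4, c5, c6, c7, c8, c9, c10, c11, c12, c13, c14, c15⟩
    set x1 : ℝ := min a0 (min R1 (b5 - R2)) with hx1def
    have hx1u1 : x1 ≤ a0 := min_le_left _ _
    have hx1u2 : x1 ≤ R1 := le_trans (min_le_right _ _) (min_le_left _ _)
    have hx1u3 : x1 ≤ b5 - R2 := le_trans (min_le_right _ _) (min_le_right _ _)
    have hx1l0 : (0:ℝ) ≤ x1 := le_min (by linarith) (le_min (by linarith) (by linarith))
    have hx1l1 : R1 - a3 ≤ x1 := le_min (by linarith) (le_min (by linarith) (by linarith))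
    have hx1l2 : R1 - a1 - b2 ≤ x1 := le_min (by linarith) (le_min (by linarith) (by linarith))
    have hx1l3 : 2 * R1 + R2 - a1 - a5 - b2 ≤ x1 := le_min (by linarith) (le_min (by linarith) (by linarith))
    have hx1l4 : R1 + R2 - a2 - b0 - b2 ≤ x1 := le_min (by linarith) (le_min (by linarith) (by linarith))
    have hx1l5 : R1 + R2 - a4 - b0 - b1 ≤ x1 := le_min (by linarith) (le_min (by linarith) (by linarith))
    have hx1l6 : R1 + R2 - a1 - b0 - b4 ≤ x1 := le_min (by linarith) (le_min (by linarith) (by linarith))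
    have hx1l7 : R1 + 2 * R2 - a2 - 2 * b0 - b1 - b4 ≤ x1 := le_min (by linarith) (le_min (by linarith) (by linarith))
    have hx1l8 : R1 + (1/2 : ℝ) * R2 - (1/2 : ℝ) * a1 - (1/2 : ℝ) * a4 - (1/2 : ℝ) * b0 - (1/2 : ℝ) * b2 ≤ x1 := le_min (by linarith) (le_min (by linarith) (by linarith))
    have hx1l9 : R1 + R2 - (1/2 : ℝ) * a2 - (1/2 : ℝ) * a4 - b0 - (1/2 : ℝ) * b1 - (1/2 : ℝ) * b2 ≤ x1 := le_min (by linarith) (le_min (by linarith) (by linarith))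
    have hx1l10 : R1 - (1/2 : ℝ) * a1 - (1/2 : ℝ) * a4 - (1/2 : ℝ) * b2 ≤ x1 := le_min (by linarith) (le_min (by linarith) (by linarith))
    have hx1l11 : (3/2 : ℝ) * R1 + (1/2 : ℝ) * R2 - (1/2 : ℝ) * a1 - (1/2 : ℝ) * a4 - (1/2 : ℝ) * a5 - (1/2 : ℝ) * b2 ≤ x1 := le_min (by linarith) (le_min (by linarith) (by linarith))
    set y1 : ℝ := min b0 (min R2 (a5 - R1)) with hy1def
    have hy1u1 : y1 ≤ b0 := min_le_left _ _
    have hy1u2 : y1 ≤ R2 := le_trans (min_le_right _ _) (min_le_left _ _)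
    have hy1u3 : y1 ≤ a5 - R1 := le_trans (min_le_right _ _) (min_le_right _ _)
    have hy1l0 : (0:ℝ) ≤ y1 := le_min (by linarith) (le_min (by linarith) (by linarith))
    have hy1l1 : R2 - b3 ≤ y1 := le_min (by linarith) (le_min (by linarith) (by linarith))
    have hy1l2 : R1 + R2 - a2 - b2 - x1 ≤ y1 := le_min (by linarith) (le_min (by linarith) (by linarith))
    have hy1l3 : R1 + R2 - a4 - b1 - x1 ≤ y1 := le_min (by linarith) (le_min (by linarith) (by linarith))
    have hy1l4 : R2 - a2 - b1 ≤ y1 := le_min (by linarith) (le_min (by linarith) (by linarith))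
    have hy1l5 : R1 + R2 - a1 - b4 - x1 ≤ y1 := le_min (by linarith) (le_min (by linarith) (by linarith))
    have hy1l6 : (1/2 : ℝ) * R1 + R2 - (1/2 : ℝ) * a2 - (1/2 : ℝ) * b1 - (1/2 : ℝ) * b4 - (1/2 : ℝ) * x1 ≤ y1 := le_min (by linarith) (le_min (by linarith) (by linarith))
    have hy1l7 : R1 + 2 * R2 - a2 - b1 - b5 ≤ y1 := le_min (by linarith) (le_min (by linarith) (by linarith))
    have hy1l8 : 2 * R1 + R2 - a1 - a4 - b2 - 2 * x1 ≤ y1 := le_min (by linarith) (le_min (by linarith) (by linarith))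
    have hy1l9 : R1 + R2 - (1/2 : ℝ) * a2 - (1/2 : ℝ) * a4 - (1/2 : ℝ) * b1 - (1/2 : ℝ) * b2 - x1 ≤ y1 := le_min (by linarith) (le_min (by linarith) (by linarith))
    set x2 : ℝ := max 0 (max (R1 - a1 - x1) (R1 + R2 - a2 - b1 - x1 - y1)) with hx2def
    have hx2l0 : (0:ℝ) ≤ x2 := le_max_left _ _
    have hx2l1 : R1 - a1 - x1 ≤ x2 := le_trans (le_max_left _ _) (le_max_right _ _)
    have hx2l2 : R1 + R2 - a2 - b1 - x1 - y1 ≤ x2 := le_trans (le_max_right _ _) (le_max_right _ _)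
    have hx2u0 : x2 ≤ R1 - x1 := max_le (by linarith) (max_le (by linarith) (by linarith))
    have hx2u1 : x2 ≤ -R2 + b4 + y1 := max_le (by linarith) (max_le (by linarith) (by linarith))
    have hx2u2 : x2 ≤ -R2 + b5 - x1 := max_le (by linarith) (max_le (by linarith) (by linarith))
    have hx2u3 : x2 ≤ b2 := max_le (by linarith) (max_le (by linarith) (by linarith))
    have hx2u4 : x2 ≤ -R1 - R2 + a4 + b2 + x1 + y1 := max_le (by linarith) (max_le (by linarith) (by linarith))
    have hx2u5 : x2 ≤ -R1 - R2 + a5 + b2 := max_le (by linarith) (max_le (by linarith) (by linarith))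
    set y2 : ℝ := max 0 (max (R2 - b1 - y1) (R2 - b2 + x2 - y1)) with hy2def
    have hy2l0 : (0:ℝ) ≤ y2 := le_max_left _ _
    have hy2l1 : R2 - b1 - y1 ≤ y2 := le_trans (le_max_left _ _) (le_max_right _ _)
    have hy2l2 : R2 - b2 + x2 - y1 ≤ y2 := le_trans (le_max_right _ _) (le_max_right _ _)
    have hy2u0 : y2 ≤ R2 - y1 := max_le (by linarith) (max_le (by linarith) (by linarith))
    have hy2u1 : y2 ≤ -R1 + a2 + x1 + x2 := max_le (by linarith) (max_le (by linarith) (by linarith))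
    have hy2u2 : y2 ≤ -R1 + a4 + x1 := max_le (by linarith) (max_le (by linarith) (by linarith))
    have hy2u3 : y2 ≤ -R1 + a5 - y1 := max_le (by linarith) (max_le (by linarith) (by linarith))
    refine ⟨x1, x2, R1 - x1 - x2, y1, y2, R2 - y1 - y2, ?_, ?_, ?_, ?_, ?_, ?_, ?_, ?_, ?_, ?_, ?_, ?_, ?_, ?_, ?_, ?_, ?_, ?_, ?_, ?_⟩ <;> linarith
end

section
/- Let a0, a1, a2, a3, a4, a5, b1, b2, b3, b4, b5, c be real numbers. Suppose there exist nonnegative reals x1, x2, x3, y1, y2, y3 with R1 = x1 + x2 + x3, R2 = y1 + y2 + y3 satisfying x1 ≤ a0, x3 ≤ a1, x3 + y2 ≤ a2, x3 + x2 ≤ a3, x3 + x2 + y2 ≤ a4, x3 + x2 + y2 + y1 + x1 ≤ a5, y2 + y1 ≤ c, y3 ≤ b1, y3 + x2 ≤ b2, y3 + y2 ≤ b3, y3 + y2 + x2 ≤ b4, and y3 + y2 + x2 + y1 + x1 ≤ b5. Then (R1, R2) satisfies: R1 ≤ a5, R1 ≤ a0 + a3, R2 ≤ b5, R2 ≤ c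 + b1, R1 + R2 ≤ a5 + b1, R1 + R2 ≤ a1 + b5, R1 + R2 ≤ a0 + c + a1 + b2, and 2·R1 + R2 ≤ a0 + a1 + a5 + b2. -/
/-- Forward direction of Corollary 1: the rate-split system in which source 1 decodes
both common messages of source 2 projects into the region (21). -/
theorem corollary1_forward
    (a0 a1 a2 a3 a4 a5 b1 b2 b3 b4 b5 c : ℝ) (R1 R2 : ℝ)
    (h : ∃ x1 x2 x3 y1 y2 y3 : ℝ,
        0 ≤ x1 ∧ 0 ≤ x2 ∧ 0 ≤ x3 ∧ 0 ≤ y1 ∧ 0 ≤ y2 ∧ 0 ≤ y3 ∧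
        R1 = x1 + x2 + x3 ∧ R2 = y1 + y2 + y3 ∧
        x1 ≤ a0 ∧
        x3 ≤ a1 ∧ x3 + y2 ≤ a2 ∧ x3 + x2 ≤ a3 ∧ x3 + x2 + y2 ≤ a4 ∧
        x3 + x2 + y2 + y1 + x1 ≤ a5 ∧
        y2 + y1 ≤ c ∧
        y3 ≤ b1 ∧ y3 + x2 ≤ b2 ∧ y3 + y2 ≤ b3 ∧ y3 + y2 + x2 ≤ b4 ∧
        y3 + y2 + x2 + y1 + x1 ≤ b5) :
    R1 ≤ a5 ∧ R1 ≤ a0 + a3 ∧ R2 ≤ b5 ∧ R2 ≤ c + b1 ∧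
      R1 + R2 ≤ a5 + b1 ∧ R1 + R2 ≤ a1 + b5 ∧
      R1 + R2 ≤ a0 + c + a1 + b2 ∧
      2 * R1 + R2 ≤ a0 + a1 + a5 + b2 := by
  obtain ⟨x1,x2,x3,y1,y2,y3,h1,h2,h3,h4,h5,h6,hR1,hR2,c1,c2,c3,c4,c5,c6,c7,c8,c9,c10,c11,c12⟩ := h
  subst hR1 hR2
  refine ⟨by linarith, by linarith, by linarith, by linarith, by linarith, by linarith, by linarith, by linarith⟩
end

section
/- Let a0, a1, a3, a5, b1, b2, b5, c be arbitrary real numbers. Then for every pair of real numbers (R1, R2) the following are equivalent: (i) R1 ≤ a5, R1 ≤ a0 + a3, R2 ≤ b5, R2 ≤ c + b1, R1 + R2 ≤ a5 + b1, R1 + R2 ≤ a1 + b5, R1 + R2 ≤ a0 + c + a1 + b2, and 2·R1 + R2 ≤ a0 + a1 + a5 + b2; (ii) R1 ≤ a5, R1 ≤ a0 + a3, R2 ≤ b5, R2 ≤ c + b1, R1 + R2 ≤ a5 + b1, R1 + R2 ≤ a1 + b5, R1 + R2 ≤ a0 + c + a3 + b1, R1 + R2 ≤ a0 + c + a1 +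 b2, 2·R1 + R2 ≤ a0 + a1 + a5 + b2, 2·R1 + R2 ≤ 2·a0 + c + a1 + a3 + b2, R1 + 2·R2 ≤ c + a1 + b1 + b5, and R1 + 2·R2 ≤ a0 + 2·c + a1 + b1 + b2. -/
/-- Second claim of Corollary 1: the region (21) coincides with the superposition-only
region (13) evaluated at the substituted bound values a2 := a1, a4 := a3, b0 := c,
b3 := b1, b4 := b2. -/
theorem corollary1_region_equivalence
    (a0 a1 a3 a5 b1 b2 b5 c : ℝ) (R1 R2 : ℝ) :
    (R1 ≤ a5 ∧ R1 ≤ a0 + a3 ∧ R2 ≤ b5 ∧ R2 ≤ c + b1 ∧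
      R1 + R2 ≤ a5 + b1 ∧ R1 + R2 ≤ a1 + b5 ∧
      R1 + R2 ≤ a0 + c + a1 + b2 ∧
      2 * R1 + R2 ≤ a0 + a1 + a5 + b2) ↔
    (R1 ≤ a5 ∧ R1 ≤ a0 + a3 ∧ R2 ≤ b5 ∧ R2 ≤ c + b1 ∧
      R1 + R2 ≤ a5 + b1 ∧ R1 + R2 ≤ a1 + b5 ∧
      R1 + R2 ≤ a0 + c + a3 + b1 ∧ R1 + R2 ≤ a0 + c + a1 + b2 ∧
      2 * R1 + R2 ≤ a0 + a1 + a5 + b2 ∧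
      2 * R1 + R2 ≤ 2 * a0 + c + a1 + a3 + b2 ∧
      R1 + 2 * R2 ≤ c + a1 + b1 + b5 ∧
      R1 + 2 * R2 ≤ a0 + 2 * c + a1 + b1 + b2) := by
  constructor
  · rintro ⟨h1,h2,h3,h4,h5,h6,h7,h8⟩
    refine ⟨h1,h2,h3,h4,h5,h6,by linarith,h7,h8,by linarith,by linarith,by linarith⟩
  · rintro ⟨h1,h2,h3,h4,h5,h6,_,h8,h9,_,_,_⟩
    exact ⟨h1,h2,h3,h4,h5,h6,h8,h9⟩
end

section
/- Let a1, a2, a3, a4, a5, b1, b2, b3, b4, b5 be real numbers with a1 ≤ a2 ≤ a4 ≤ a5, a1 ≤ a3 ≤ a4, b1 ≤ b2 ≤ b4 ≤ b5, and b1 ≤ b3 ≤ b4. Then for every pair of nonnegative real numbers (R1, R2) the following are equivalent: (i) R1 ≤ a5, R1 ≤ a3, R1 ≤ a1 + b2, R2 ≤ b5, R2 ≤ b3, R2 ≤ b1 + a2, R1 + R2 ≤ a5 + b1, R1 + R2 ≤ a1 + b5, R1 + R2 ≤ a4 + b1, R1 + R2 ≤ a1 + b4, R1 + R2 ≤ a2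 + b2, 2·R1 + R2 ≤ a1 + a5 + b2, 2·R1 + R2 ≤ a1 + a4 + b2, R1 + 2·R2 ≤ a2 + b1 + b5, and R1 + 2·R2 ≤ a2 + b1 + b4; (ii) R1 ≤ a3, R2 ≤ b3, R1 + R2 ≤ a4 + b1, R1 + R2 ≤ a1 + b4, R1 + R2 ≤ a2 + b2, 2·R1 + R2 ≤ a4 + a1 + b2, R1 + 2·R2 ≤ a2 + b1 + b4, R1 ≤ a1 + b2, and R2 ≤ b1 + a2. -/
/-- Reduction of the superposition-only region (13) (with the extra bounds of Remark 2)
to the compact Han–Kobayashi region when the generalized-feedback bounds vanish. -/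
theorem superpositionOnly_reduces_to_HanKobayashi
    (a1 a2 a3 a4 a5 b1 b2 b3 b4 b5 : ℝ)
    (ha12 : a1 ≤ a2) (ha24 : a2 ≤ a4) (ha45 : a4 ≤ a5)
    (ha13 : a1 ≤ a3) (ha34 : a3 ≤ a4)
    (hb12 : b1 ≤ b2) (hb24 : b2 ≤ b4) (hb45 : b4 ≤ b5)
    (hb13 : b1 ≤ b3) (hb34 : b3 ≤ b4)
    (R1 R2 : ℝ) (hR1 : 0 ≤ R1) (hR2 : 0 ≤ R2) :
    (R1 ≤ a5 ∧ R1 ≤ a3 ∧ R1 ≤ a1 + b2 ∧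
      R2 ≤ b5 ∧ R2 ≤ b3 ∧ R2 ≤ b1 + a2 ∧
      R1 + R2 ≤ a5 + b1 ∧ R1 + R2 ≤ a1 + b5 ∧
      R1 + R2 ≤ a4 + b1 ∧ R1 + R2 ≤ a1 + b4 ∧ R1 + R2 ≤ a2 + b2 ∧
      2 * R1 + R2 ≤ a1 + a5 + b2 ∧ 2 * R1 + R2 ≤ a1 + a4 + b2 ∧
      R1 + 2 * R2 ≤ a2 + b1 + b5 ∧ R1 + 2 * R2 ≤ a2 + b1 + b4) ↔
    (R1 ≤ a3 ∧ R2 ≤ b3 ∧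
      R1 + R2 ≤ a4 + b1 ∧ R1 + R2 ≤ a1 + b4 ∧ R1 + R2 ≤ a2 + b2 ∧
      2 * R1 + R2 ≤ a4 + a1 + b2 ∧ R1 + 2 * R2 ≤ a2 + b1 + b4 ∧
      R1 ≤ a1 + b2 ∧ R2 ≤ b1 + a2) := by
  constructor
  · rintro ⟨h1,h2,h3,h4,h5,h6,h7,h8,h9,h10,h11,h12,h13,h14,h15⟩
    refine ⟨by linarith,by linarith,by linarith,by linarith,by linarith,by linarith,by linarith,by linarith,by linarith⟩
  · rintro ⟨h1,h2,h3,h4,h5,h6,h7,h8,h9⟩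
    refine ⟨by linarith,by linarith,by linarith,by linarith,by linarith,by linarith,by linarith,by linarith,by linarith,by linarith,by linarith,by linarith,by linarith,by linarith,by linarith⟩
end

section
/- Let a0, b0, a2, a3, a4, a5 be real numbers with 0 ≤ a0, 0 ≤ b0, a2 ≤ a4 ≤ a5, a3 ≤ a4, and a2 + a3 ≥ a4. Then for every pair of nonnegative real numbers (R1, R2) the following are equivalent: (i) (R1, R2) satisfies the superposition-only region constraints with a1 = b1 = 0, b2 = a3, b3 = a2, b4 = a4, b5 = a5, namely: R1 ≤ a5, R1 ≤ a0 + a3, R1 ≤ a0 + a3 (extra bound), R2 ≤ a5, R2 ≤ b0 + a2, R2 ≤ b0 + a2 (extra bound), R1 + R2 ≤ a5, R1 + R2 ≤ a0 + b0 + a4, R1 + R2 ≤ a0 + b0 + a4, R1 + R2 ≤ a0 + b0 + a2 + a3, 2·R1 + R2 ≤ a0 + a5 + a3, 2·R1 + R2 ≤ 2·a0 + b0 + a4 + a3, R1 + 2·R2 ≤ b0 + a2 + a5, and R1 + 2·R2 ≤ a0 + 2·b0 + a2 + a4; (ii) R1 ≤ a0 + a3, R2 ≤ b0 + a2, R1 +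 R2 ≤ a5, and R1 + R2 ≤ a0 + b0 + a4. -/
/-- Reduction of the superposition-only region (13) to Willems's achievable region (18)
for the multiple access channel with generalized feedback, when the two destinations
coincide and the private-message variables are trivial. -/
theorem superpositionOnly_reduces_to_MACGF
    (a0 b0 a2 a3 a4 a5 : ℝ)
    (ha0 : 0 ≤ a0) (hb0 : 0 ≤ b0)
    (ha24 : a2 ≤ a4) (ha45 : a4 ≤ a5) (ha34 : a3 ≤ a4)
    (hsum : a2 + a3 ≥ a4)
    (R1 R2 : ℝ) (hR1 : 0 ≤ R1) (hR2 : 0 ≤ R2) :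
    (R1 ≤ a5 ∧ R1 ≤ a0 + a3 ∧ R1 ≤ a0 + a3 ∧
      R2 ≤ a5 ∧ R2 ≤ b0 + a2 ∧ R2 ≤ b0 + a2 ∧
      R1 + R2 ≤ a5 ∧ R1 + R2 ≤ a0 + b0 + a4 ∧ R1 + R2 ≤ a0 + b0 + a4 ∧
      R1 + R2 ≤ a0 + b0 + a2 + a3 ∧
      2 * R1 + R2 ≤ a0 + a5 + a3 ∧
      2 * R1 + R2 ≤ 2 * a0 + b0 + a4 + a3 ∧
      R1 + 2 * R2 ≤ b0 + a2 + a5 ∧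
      R1 + 2 * R2 ≤ a0 + 2 * b0 + a2 + a4) ↔
    (R1 ≤ a0 + a3 ∧ R2 ≤ b0 + a2 ∧
      R1 + R2 ≤ a5 ∧ R1 + R2 ≤ a0 + b0 + a4) := by
  constructor
  · rintro ⟨h1,h2,h3,h4,h5,h6,h7,h8,h9,h10,h11,h12,h13,h14⟩; exact ⟨h2,h5,h7,h8⟩
  · rintro ⟨h1,h2,h3,h4⟩; refine ⟨by linarith,h1,h1,by linarith,h2,h2,h3,h4,h4,by linarith,by linarith,by linarith,by linarith,by linarith⟩
end
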